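/- Let μ be a finite Borel measure with compact infinite support on ℂ, M its Bergman shift Hessenberg matrix, and π_n the projection onto span{e_1,…,e_n}. Then for |z| > ‖M‖, the ratio of consecutive monic orthogonal polynomials satisfies Φ_{n−1}(z;μ)/Φ_n(z;μ) = ((z − π_n M π_n)^{−1})_{n,n} = Σ_{j=0}^∞ ((π_n M π_n)^j)_{n,n} / z^{j+1}. -/

import Mathlib

open MeasureTheory Polynomial Filter

noncomputable section

/-- The support of a measure: points all of whose neighborhoods have positive measure. -/
def msupport (mu : Measure ℂ) : Set ℂ := {x | ∀ U ∈ nhds x, mu U ≠ 0}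

/-- `φ` is the sequence of orthonormal polynomials for `μ`, with positive leading
coefficients `κ`. -/
def IsOrthonormalPolys (mu : Measure ℂ) (φ : ℕ → Polynomial ℂ) (κ : ℕ → ℝ) : Prop :=
  (∀ n, (φ n).degree = n) ∧ (∀ n, 0 < κ n) ∧ (∀ n, (φ n).leadingCoeff = (κ n : ℂ)) ∧
  ∀ m n, (∫ z, (φ m).eval z * (starRingEnd ℂ) ((φ n).eval z) ∂mu) = if m = n then 1 else 0

open scoped Matrix

/-! Expanding `z φ_j` in the orthonormal basis gives
`z φ_j(z) = Σ_{i ≤ j+1} ⟨z φ_j, φ_i⟩ φ_i(z)`, where the top coefficient is `κ_j / κ_{j+1}`.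
For `j < n` this says that the row vector `v = (φ_0(z), …, φ_{n-1}(z))` satisfies
`v (z - π_n M π_n) = (κ_{n-1} / κ_n) φ_n(z) e_{n-1}`. Since `‖π_n M π_n‖ ≤ ‖M‖ < |z|`, the matrix
`z - π_n M π_n` is invertible with inverse given by the Neumann series, so `v` is
`(κ_{n-1} / κ_n) φ_n(z)` times the last row of the inverse. The first entry `φ_0(z) = κ_0 ≠ 0`
shows `φ_n(z) ≠ 0`, and the last entry gives the ratio `Φ_{n-1}(z) / Φ_n(z)`. -/

theorem summable_and_tsum_mul_smul_one_sub {𝕜 R : Type*} [NontriviallyNormedField 𝕜]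
    [NormedRing R] [NormedAlgebra 𝕜 R] [HasSummableGeomSeries R] {a : R} {z : 𝕜}
    (h : ‖a‖ < ‖z‖) :
    Summable (fun j : ℕ => (z ^ (j + 1))⁻¹ • a ^ j) ∧
      (∑' j : ℕ, (z ^ (j + 1))⁻¹ • a ^ j) * (z • 1 - a) = 1 := by
  have hz : z ≠ 0 := norm_pos_iff.1 ((norm_nonneg a).trans_lt h)
  have ht : ‖z⁻¹ • a‖ < 1 := by
    rwa [norm_smul, norm_inv, inv_mul_lt_one₀ (norm_pos_iff.2 hz)]
  have hterm : (fun j : ℕ => (z ^ (j + 1))⁻¹ • a ^ j) = fun j => z⁻¹ • (z⁻¹ • a) ^ j := by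
    ext j
    rw [_root_.smul_pow, smul_smul, ← inv_pow, pow_succ']
  rw [hterm]
  refine ⟨(summable_geometric_of_norm_lt_one ht).const_smul _, ?_⟩
  rw [tsum_const_smul'', smul_mul_assoc, ← mul_smul_comm, smul_sub, smul_smul,
    inv_mul_cancel₀ hz, one_smul, geom_series_mul_neg _ ht]

section L2OperatorNorm

open scoped Matrix.Norms.L2Operator

section Resolvent

variable {𝕜 n : Type*} [RCLike 𝕜] [Fintype n] [DecidableEq n] {A : Matrix n n 𝕜} {z : 𝕜}

theorem Matrix.isUnit_det_smul_one_sub_of_norm_lt (h : ‖A‖ < ‖z‖) : IsUnit (z • 1 - A).det :=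
  Matrix.isUnit_det_of_left_inverse (summable_and_tsum_mul_smul_one_sub h).2

theorem Matrix.inv_smul_one_sub_apply_eq_tsum (h : ‖A‖ < ‖z‖) (i k : n) :
    (z • 1 - A)⁻¹ i k = ∑' j : ℕ, (A ^ j) i k / z ^ (j + 1) := by
  obtain ⟨hs, hinv⟩ := summable_and_tsum_mul_smul_one_sub h
  rw [Matrix.inv_eq_left_inv hinv]
  simpa [div_eq_inv_mul] using
    hs.map_tsum (Matrix.entryLinearMap 𝕜 𝕜 i k) (continuous_id.matrix_elem i k)

end Resolvent

local notation "ℓ²" => lp (fun _ : ℕ => ℂ) 2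

def finToLp {n : ℕ} (x : Fin n → ℂ) : ℓ² := ∑ j : Fin n, lp.single 2 (j : ℕ) (x j)

theorem norm_finToLp {n : ℕ} (x : EuclideanSpace ℂ (Fin n)) : ‖finToLp x‖ = ‖x‖ := by
  set g : ℕ → ℂ := fun k => if h : k < n then x ⟨k, h⟩ else 0
  have hg : ∀ j : Fin n, g j = x j := fun j => dif_pos j.2
  have key := lp.norm_sum_single (p := 2) (by norm_num) g
    (Finset.univ.map (Fin.valEmbedding (n := n)))
  simp only [Finset.sum_map, Fin.valEmbedding_apply, hg, ENNReal.toReal_ofNat,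
    Real.rpow_two] at key
  rw [← PiLp.norm_sq_eq_of_L2] at key
  exact (pow_left_inj₀ (norm_nonneg _) (norm_nonneg _) two_ne_zero).1 key

theorem sum_fin_norm_sq_le (n : ℕ) (y : ℓ²) : ∑ i : Fin n, ‖y i‖ ^ 2 ≤ ‖y‖ ^ 2 := by
  have := lp.sum_rpow_le_norm_rpow (p := 2) (by norm_num) y
    (Finset.univ.map (Fin.valEmbedding (n := n)))
  simpa only [Finset.sum_map, Fin.valEmbedding_apply, ENNReal.toReal_ofNat, Real.rpow_two] using this

theorem apply_finToLp (M : ℓ² →L[ℂ] ℓ²) {n : ℕ} (x : Fin n → ℂ) (i : ℕ) :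
    M (finToLp x) i = ∑ j : Fin n, M (lp.single 2 j 1) i * x j := by
  rw [finToLp, map_sum, lp.coeFn_sum, Finset.sum_apply]
  refine Finset.sum_congr rfl fun j _ => ?_
  have : lp.single 2 (j : ℕ) (x j) = x j • (lp.single 2 (j : ℕ) 1 : ℓ²) := by
    rw [← lp.single_smul, smul_eq_mul, mul_one]
  rw [this, map_smul, lp.coeFn_smul, Pi.smul_apply, smul_eq_mul, mul_comm]

theorem Matrix.norm_le_of_eq_apply_single (M : ℓ² →L[ℂ] ℓ²) {n : ℕ} (A : Matrix (Fin n) (Fin n) ℂ)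
    (hA : ∀ i j : Fin n, A i j = M (lp.single 2 j 1) i) : ‖A‖ ≤ ‖M‖ := by
  rw [Matrix.cstar_norm_def]
  refine ContinuousLinearMap.opNorm_le_bound _ (norm_nonneg M) fun x => ?_
  have hAx : ∀ i : Fin n, Matrix.toEuclideanCLM (𝕜 := ℂ) A x i = M (finToLp x) i := by
    intro i
    simp [apply_finToLp, ← hA, Matrix.mulVec, dotProduct]
  refine (pow_le_pow_iff_left₀ (norm_nonneg _) (by positivity) two_ne_zero).1 ?_
  calc ‖Matrix.toEuclideanCLM (𝕜 := ℂ) A x‖ ^ 2 = ∑ i : Fin n, ‖M (finToLp x) i‖ ^ 2 := by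
        simp only [PiLp.norm_sq_eq_of_L2, hAx]
    _ ≤ ‖M (finToLp x)‖ ^ 2 := sum_fin_norm_sq_le n _
    _ ≤ (‖M‖ * ‖x‖) ^ 2 := by
        rw [← norm_finToLp x]
        exact pow_le_pow_left₀ (norm_nonneg _) (M.le_opNorm _) 2

end L2OperatorNorm

theorem msupport_eq_support (mu : Measure ℂ) : msupport mu = mu.support := by
  ext x
  simp [msupport, Measure.mem_support_iff_forall, pos_iff_ne_zero]

theorem integrable_of_isCompact_msupport {mu : Measure ℂ} [IsFiniteMeasure mu]
    (hcs : IsCompact (msupport mu)) {f : ℂ → ℂ} (hf : Continuous f) : Integrable f mu := by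
  have hae : ∀ᵐ x ∂mu, x ∈ msupport mu := by
    rw [msupport_eq_support]; exact Measure.support_mem_ae
  rw [← Measure.restrict_eq_self_of_ae_mem hae]
  exact hf.continuousOn.integrableOn_compact hcs

def polyInner (mu : Measure ℂ) (p q : ℂ[X]) : ℂ :=
  ∫ z, p.eval z * (starRingEnd ℂ) (q.eval z) ∂mu

theorem polyInner_sum_smul_left {mu : Measure ℂ} [IsFiniteMeasure mu]
    (hcs : IsCompact (msupport mu)) {ι : Type*} (s : Finset ι) (c : ι → ℂ) (f : ι → ℂ[X])
    (q : ℂ[X]) :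
    polyInner mu (∑ i ∈ s, c i • f i) q = ∑ i ∈ s, c i * polyInner mu (f i) q := by
  simp only [polyInner, eval_finsetSum, eval_smul, smul_eq_mul, Finset.sum_mul, mul_assoc]
  rw [integral_finsetSum]
  · simp only [integral_const_mul]
  · exact fun i _ => integrable_of_isCompact_msupport hcs (by fun_prop)

/-- The matrix `π_n M π_n`: multiplication by `z` in the basis `φ`, cut to its first `n` rows and
columns. -/
def truncatedHessenberg (mu : Measure ℂ) (φ : ℕ → ℂ[X]) (n : ℕ) : Matrix (Fin n) (Fin n) ℂ :=
  Matrix.of fun i j => polyInner mu (X * φ j) (φ i)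

namespace IsOrthonormalPolys

variable {mu : Measure ℂ} {φ : ℕ → ℂ[X]} {κ : ℕ → ℝ}

theorem leadingCoeff_eq (hON : IsOrthonormalPolys mu φ κ) (n : ℕ) :
    (φ n).leadingCoeff = κ n :=
  hON.2.2.1 n

theorem coe_κ_ne_zero (hON : IsOrthonormalPolys mu φ κ) (n : ℕ) : (κ n : ℂ) ≠ 0 := by
  exact_mod_cast (hON.2.1 n).ne'

theorem natDegree_eq (hON : IsOrthonormalPolys mu φ κ) (n : ℕ) : (φ n).natDegree = n :=
  natDegree_eq_of_degree_eq_some (hON.1 n)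

theorem coeff_self (hON : IsOrthonormalPolys mu φ κ) (n : ℕ) : (φ n).coeff n = κ n := by
  rw [← hON.leadingCoeff_eq, leadingCoeff, hON.natDegree_eq]

theorem eval_zero_eq (hON : IsOrthonormalPolys mu φ κ) (z : ℂ) : (φ 0).eval z = κ 0 := by
  rw [eq_C_of_natDegree_eq_zero (hON.natDegree_eq 0), eval_C, hON.coeff_self]

theorem polyInner_eq_ite (hON : IsOrthonormalPolys mu φ κ) (m n : ℕ) :
    polyInner mu (φ m) (φ n) = if m = n then 1 else 0 :=
  hON.2.2.2 m n

theorem exists_eq_sum_smul (hON : IsOrthonormalPolys mu φ κ) {p : ℂ[X]} {N : ℕ}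
    (hp : p.degree < N) : ∃ c : Fin N → ℂ, ∑ i, c i • φ i = p := by
  have hspan := Polynomial.Sequence.span_degreeLT ⟨φ, hON.1⟩ (m := N) fun i _ => by
    rw [hON.leadingCoeff_eq]
    exact (hON.coe_κ_ne_zero i).isUnit
  rw [← Submodule.mem_span_range_iff_exists_fun, Set.range_comp', Fin.range_val]
  exact hspan ▸ mem_degreeLT.2 hp

theorem degree_X_mul (hON : IsOrthonormalPolys mu φ κ) (j : ℕ) :
    (X * φ j).degree = ((j + 1 : ℕ) : WithBot ℕ) := by
  rw [degree_mul, degree_X, hON.1 j]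
  norm_cast
  omega

variable [IsFiniteMeasure mu] (hcs : IsCompact (msupport mu))
include hcs

theorem polyInner_sum_smul (hON : IsOrthonormalPolys mu φ κ) {N : ℕ} (c : Fin N → ℂ)
    (k : Fin N) : polyInner mu (∑ i, c i • φ i) (φ k) = c k := by
  simp [polyInner_sum_smul_left hcs, hON.polyInner_eq_ite, Fin.val_inj]

theorem eq_sum_polyInner_smul (hON : IsOrthonormalPolys mu φ κ) {p : ℂ[X]} {N : ℕ}
    (hp : p.degree < N) : p = ∑ i : Fin N, polyInner mu p (φ i) • φ i := by
  obtain ⟨c, rfl⟩ := hON.exists_eq_sum_smul hp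
  simp only [hON.polyInner_sum_smul hcs]

theorem polyInner_eq_zero_of_degree_lt (hON : IsOrthonormalPolys mu φ κ) {p : ℂ[X]} {k : ℕ}
    (hp : p.degree < k) : polyInner mu p (φ k) = 0 := by
  obtain ⟨c, rfl⟩ := hON.exists_eq_sum_smul hp
  rw [polyInner_sum_smul_left hcs]
  exact Finset.sum_eq_zero fun i _ => by simp [hON.polyInner_eq_ite, i.2.ne]

theorem polyInner_X_mul_eq_zero (hON : IsOrthonormalPolys mu φ κ) {i j : ℕ} (h : j + 1 < i) :
    polyInner mu (X * φ j) (φ i) = 0 :=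
  hON.polyInner_eq_zero_of_degree_lt hcs (by rw [hON.degree_X_mul]; exact_mod_cast h)

theorem polyInner_X_mul_succ (hON : IsOrthonormalPolys mu φ κ) (j : ℕ) :
    polyInner mu (X * φ j) (φ (j + 1)) = κ j / κ (j + 1) := by
  have hexp := congrArg (coeff · (j + 1)) <| hON.eq_sum_polyInner_smul hcs (N := j + 2)
    (p := X * φ j) (by rw [hON.degree_X_mul]; exact_mod_cast Nat.lt_succ_self _)
  have hlow : ∀ i : Fin (j + 1), (φ i).coeff (j + 1) = 0 := fun i =>
    coeff_eq_zero_of_natDegree_lt (by rw [hON.natDegree_eq]; omega)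
  rw [Fin.sum_univ_castSucc] at hexp
  simp only [coeff_X_mul, coeff_add, finsetSum_coeff, coeff_smul, smul_eq_mul, Fin.val_castSucc,
    hlow, mul_zero, Finset.sum_const_zero, zero_add, Fin.val_last, hON.coeff_self] at hexp
  rw [eq_div_iff (hON.coe_κ_ne_zero _), hexp]

theorem mul_eval_eq_sum_polyInner (hON : IsOrthonormalPolys mu φ κ) (z : ℂ) {j N : ℕ} (h : j + 2 ≤ N) :
    z * (φ j).eval z = ∑ i : Fin N, polyInner mu (X * φ j) (φ i) * (φ i).eval z := by
  have hexp := congrArg (eval z) <| hON.eq_sum_polyInner_smul hcs (N := N)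
    (p := X * φ j) (by rw [hON.degree_X_mul]; exact_mod_cast h)
  simpa [eval_finsetSum] using hexp

theorem vecMul_smul_one_sub_truncatedHessenberg (hON : IsOrthonormalPolys mu φ κ) (z : ℂ)
    (m : ℕ) :
    (fun i : Fin (m + 1) => (φ i).eval z) ᵥ* (z • 1 - truncatedHessenberg mu φ (m + 1)) =
      Pi.single (Fin.last m) (κ m / κ (m + 1) * (φ (m + 1)).eval z) := by
  ext j
  have hrec := hON.mul_eval_eq_sum_polyInner hcs z (N := m + 2) (j := j) (by omega)
  rw [Fin.sum_univ_castSucc] at hrec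
  have hH : ((fun i : Fin (m + 1) => (φ i).eval z) ᵥ* truncatedHessenberg mu φ (m + 1)) j =
      ∑ i : Fin (m + 1), polyInner mu (X * φ j) (φ i) * (φ i).eval z := by
    simp [Matrix.vecMul, dotProduct, truncatedHessenberg, mul_comm]
  simp only [Matrix.vecMul_sub, Matrix.vecMul_smul, Matrix.vecMul_one, Pi.sub_apply,
    Pi.smul_apply, smul_eq_mul, hrec, hH, Fin.val_castSucc, Fin.val_last, add_sub_cancel_left]
  rcases eq_or_ne j (Fin.last m) with rfl | hj
  · simp [hON.polyInner_X_mul_succ hcs]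
  · have hjm := Fin.val_lt_last hj
    rw [Pi.single_eq_of_ne hj, hON.polyInner_X_mul_eq_zero hcs (by omega), zero_mul]

theorem eval_div_eval_succ_eq_inv_apply_last (hON : IsOrthonormalPolys mu φ κ) (z : ℂ)
    (m : ℕ) (hB : IsUnit (z • 1 - truncatedHessenberg mu φ (m + 1)).det) :
    ((κ m : ℂ)⁻¹ * (φ m).eval z) / ((κ (m + 1) : ℂ)⁻¹ * (φ (m + 1)).eval z) =
      (z • 1 - truncatedHessenberg mu φ (m + 1))⁻¹ (Fin.last m) (Fin.last m) := by
  set B := z • 1 - truncatedHessenberg mu φ (m + 1)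
  set c : ℂ := κ m / κ (m + 1) * (φ (m + 1)).eval z
  have hv : (fun i : Fin (m + 1) => (φ i).eval z) = c • B⁻¹ (Fin.last m) := by
    rw [← Matrix.vecMul_one (fun i : Fin (m + 1) => (φ i).eval z), ← Matrix.mul_nonsing_inv B hB,
      ← Matrix.vecMul_vecMul, hON.vecMul_smul_one_sub_truncatedHessenberg hcs, Matrix.single_vecMul]
    rfl
  have hc : c ≠ 0 := by
    intro h
    have h0 := congrFun hv 0
    simp [h, hON.eval_zero_eq, hON.coe_κ_ne_zero] at h0
  have hlast := congrFun hv (Fin.last m)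
  simp only [Fin.val_last, Pi.smul_apply, smul_eq_mul] at hlast
  have hφ : (φ (m + 1)).eval z ≠ 0 := right_ne_zero_of_mul hc
  rw [hlast]
  simp only [c]
  field_simp [hON.coe_κ_ne_zero m, hON.coe_κ_ne_zero (m + 1)]

end IsOrthonormalPolys

/-- For `|z| > ‖M‖`, the ratio of consecutive monic orthogonal polynomials equals the
(n,n) entry of the resolvent of the n-th truncation of `M`, which in turn equals the
Neumann series `Σ_j ((π_n M π_n)^j)_{n,n} / z^{j+1}`. -/
theorem stmt16 (mu : Measure ℂ) [IsFiniteMeasure mu]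
    (hcs : IsCompact (msupport mu))
    (φ : ℕ → Polynomial ℂ) (κ : ℕ → ℝ) (hON : IsOrthonormalPolys mu φ κ)
    (M : lp (fun _ : ℕ => ℂ) 2 →L[ℂ] lp (fun _ : ℕ => ℂ) 2)
    (hM : ∀ k j : ℕ, (M (lp.single 2 k 1)) j =
      ∫ z, z * (φ k).eval z * (starRingEnd ℂ) ((φ j).eval z) ∂mu)
    (z : ℂ) (hz : ‖M‖ < ‖z‖) (n : ℕ) (hn : 1 ≤ n) :
    (((κ (n - 1) : ℂ))⁻¹ * (φ (n - 1)).eval z) / (((κ n : ℂ))⁻¹ * (φ n).eval z) =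
        ((z • (1 : Matrix (Fin n) (Fin n) ℂ) -
            Matrix.of fun i j : Fin n =>
              ∫ w, w * (φ (j : ℕ)).eval w * (starRingEnd ℂ) ((φ (i : ℕ)).eval w) ∂mu)⁻¹)
          ⟨n - 1, by omega⟩ ⟨n - 1, by omega⟩ ∧
      (((κ (n - 1) : ℂ))⁻¹ * (φ (n - 1)).eval z) / (((κ n : ℂ))⁻¹ * (φ n).eval z) =
        ∑' j : ℕ,
          (((Matrix.of fun i j : Fin n =>
              ∫ w, w * (φ (j : ℕ)).eval w * (starRingEnd ℂ) ((φ (i : ℕ)).eval w) ∂mu) ^ j)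
            ⟨n - 1, by omega⟩ ⟨n - 1, by omega⟩) / z ^ (j + 1) := by
  obtain ⟨m, rfl⟩ : ∃ m, n = m + 1 := ⟨n - 1, by omega⟩
  have hH : (Matrix.of fun i j : Fin (m + 1) =>
      ∫ w, w * (φ j).eval w * (starRingEnd ℂ) ((φ i).eval w) ∂mu) =
      truncatedHessenberg mu φ (m + 1) := by
    ext i j
    simp [truncatedHessenberg, polyInner]
  have hlast : (⟨m + 1 - 1, by omega⟩ : Fin (m + 1)) = Fin.last m := rfl
  open scoped Matrix.Norms.L2Operator in
  have hnorm : ‖truncatedHessenberg mu φ (m + 1)‖ < ‖z‖ := by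
    refine (Matrix.norm_le_of_eq_apply_single M _ fun i j => ?_).trans_lt hz
    rw [← hH, hM]
    rfl
  have hratio := hON.eval_div_eval_succ_eq_inv_apply_last hcs z m
    (Matrix.isUnit_det_smul_one_sub_of_norm_lt hnorm)
  rw [hH, hlast, Nat.add_sub_cancel]
  exact ⟨hratio, hratio.trans (Matrix.inv_smul_one_sub_apply_eq_tsum hnorm _ _)⟩
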